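/- The function θ₁(x+1) - θ₁(x), where θ₁(x) = x(log x - ψ(x)), tends to 0 as x → ∞, and satisfies the bounds (x+1)log(1 + 1/x) - 1/(2x) - 1 < θ₁(x+1) - θ₁(x) < (x+1)log(1 + 1/x) - 1/(2x) + 1/(12x²) - 1 for all x > 0. -/

import Mathlib

open Real Filter

/-- The digamma function ψ(x) = Γ′(x)/Γ(x). -/
noncomputable def digamma (x : ℝ) : ℝ := deriv Real.Gamma x / Real.Gamma x

/-!
Convexity of `log ∘ Gamma` (Bohr–Mollerup) compares `ψ(x)` and `ψ(x + 1) = ψ(x) + 1/x` with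
the slope `log x` of `log ∘ Gamma` on `[x, x + 1]`, so `0 ≤ log x - ψ(x) ≤ 1/x`. Since
`θ₁(x + 1) - θ₁(x) = (x + 1) log (1 + 1/x) - 1 - 1/x + (log x - ψ(x))`, the theorem reduces
to `1/(2x) < log x - ψ(x) < 1/(2x) + 1/(12x²)`. In each case the gap `g` between the two
sides tends to `0` and satisfies `g(x + 1) < g(x)`, hence is positive; with
`u = log (1 + 1/x)` the step `g(x + 1) < g(x)` is `u < sinh u`, resp.
`sinh u (4 - cosh u) < 3u`.
-/

open Set Topology

lemma pos_of_tendsto_zero_of_add_one_lt {g : ℝ → ℝ} {x : ℝ} (hg : Tendsto g atTop (𝓝 0))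
    (hstep : ∀ y, x ≤ y → g (y + 1) < g y) : 0 < g x := by
  have hanti : StrictAnti fun n : ℕ => g (x + n) := strictAnti_nat_of_succ_lt fun n => by
    simpa [add_assoc] using hstep (x + n) (by simp)
  have hlim : Tendsto (fun n : ℕ => g (x + n)) atTop (𝓝 0) :=
    hg.comp (tendsto_atTop_add_const_left _ x tendsto_natCast_atTop_atTop)
  calc 0 ≤ g (x + (1 : ℕ)) := hanti.antitone.le_of_tendsto hlim 1
    _ < g (x + (0 : ℕ)) := hanti zero_lt_one
    _ = g x := by simp

lemma hasDerivAt_log_Gamma {x : ℝ} (hx : 0 < x) : HasDerivAt (log ∘ Gamma) (digamma x) x :=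
  (differentiableAt_Gamma fun m => by linarith [(m.cast_nonneg : (0:ℝ) ≤ m)]).hasDerivAt.log
    (Gamma_pos_of_pos hx).ne'

lemma log_Gamma_add_one {x : ℝ} (hx : 0 < x) :
    (log ∘ Gamma) (x + 1) = (log ∘ Gamma) x + log x := by
  simp only [Function.comp_apply, Gamma_add_one hx.ne', log_mul hx.ne' (Gamma_pos_of_pos hx).ne',
    add_comm]

lemma digamma_add_one {x : ℝ} (hx : 0 < x) : digamma (x + 1) = digamma x + 1 / x := by
  have hshift : HasDerivAt (fun y => (log ∘ Gamma) (y + 1)) (digamma (x + 1)) x :=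
    (hasDerivAt_log_Gamma (by linarith)).comp_add_const x 1
  have hsum : HasDerivAt (fun y => (log ∘ Gamma) y + log y) (digamma x + 1 / x) x := by
    simpa only [one_div] using (hasDerivAt_log_Gamma hx).fun_add (hasDerivAt_log hx.ne')
  refine hshift.unique (hsum.congr_of_eventuallyEq ?_)
  filter_upwards [eventually_gt_nhds hx] with y hy using log_Gamma_add_one hy

lemma digamma_le_log {x : ℝ} (hx : 0 < x) : digamma x ≤ log x := by
  have hslope := convexOn_log_Gamma.le_slope_of_hasDerivAt (mem_Ioi.2 hx) (mem_Ioi.2 (by linarith))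
    (lt_add_one x) (hasDerivAt_log_Gamma hx)
  rwa [slope_def_field, log_Gamma_add_one hx, add_sub_cancel_left, add_sub_cancel_left,
    div_one] at hslope

lemma log_le_digamma_add_one {x : ℝ} (hx : 0 < x) : log x ≤ digamma (x + 1) := by
  have hslope := convexOn_log_Gamma.slope_le_of_hasDerivAt (mem_Ioi.2 hx) (mem_Ioi.2 (by linarith))
    (lt_add_one x) (hasDerivAt_log_Gamma (by linarith))
  rwa [slope_def_field, log_Gamma_add_one hx, add_sub_cancel_left, add_sub_cancel_left,
    div_one] at hslope

lemma tendsto_log_sub_digamma_atTop : Tendsto (fun x => log x - digamma x) atTop (𝓝 0) := by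
  refine tendsto_of_tendsto_of_tendsto_of_le_of_le' tendsto_const_nhds
    tendsto_inv_atTop_zero ?_ ?_
  · filter_upwards [eventually_gt_atTop 0] with x hx using sub_nonneg.2 (digamma_le_log hx)
  · filter_upwards [eventually_gt_atTop 0] with x hx
    have := log_le_digamma_add_one hx
    rw [digamma_add_one hx] at this
    simp only [one_div] at this
    linarith

lemma sinh_mul_four_sub_cosh_lt {u : ℝ} (hu : 0 < u) : sinh u * (4 - cosh u) < 3 * u := by
  let h : ℝ → ℝ := fun v => 3 * v - sinh v * (4 - cosh v)
  have hderiv : ∀ v, HasDerivAt h (2 * (cosh v - 1) ^ 2) v := fun v => by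
    refine (((hasDerivAt_id' v).const_mul 3).fun_sub
      ((hasDerivAt_sinh v).fun_mul ((hasDerivAt_cosh v).const_sub 4))).congr_deriv ?_
    linear_combination -cosh_sq v
  have hmono : StrictMonoOn h (Ici 0) := by
    refine strictMonoOn_of_deriv_pos (convex_Ici 0)
      (fun v _ => (hderiv v).continuousAt.continuousWithinAt) fun v hv => ?_
    rw [interior_Ici, mem_Ioi] at hv
    rw [(hderiv v).deriv]
    have := one_lt_cosh.2 hv.ne'
    positivity
  have h0u : h 0 < h u := hmono (mem_Ici.2 le_rfl) (mem_Ici.2 hu.le) hu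
  simp only [h, mul_zero, sinh_zero, zero_mul, sub_zero] at h0u
  linarith

lemma log_one_add_inv_lt {x : ℝ} (hx : 0 < x) :
    log (1 + 1 / x) < 1 / (2 * x) + 1 / (2 * (x + 1)) := by
  have hs : 0 < 1 + 1 / x := by positivity
  have := self_lt_sinh_iff.2 (log_pos (lt_add_of_pos_right 1 (one_div_pos.2 hx)))
  rw [sinh_log hs] at this
  convert this using 1
  field_simp
  ring

lemma lt_log_one_add_inv {x : ℝ} (hx : 0 < x) :
    1 / (2 * x) + 1 / (2 * (x + 1)) - (1 / (12 * x ^ 2) - 1 / (12 * (x + 1) ^ 2)) <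
      log (1 + 1 / x) := by
  have hs : 0 < 1 + 1 / x := by positivity
  have := sinh_mul_four_sub_cosh_lt (log_pos (lt_add_of_pos_right 1 (one_div_pos.2 hx)))
  rw [sinh_log hs, cosh_log hs] at this
  have e : 1 / (2 * x) + 1 / (2 * (x + 1)) - (1 / (12 * x ^ 2) - 1 / (12 * (x + 1) ^ 2)) =
      (1 + 1 / x - (1 + 1 / x)⁻¹) / 2 * (4 - (1 + 1 / x + (1 + 1 / x)⁻¹) / 2) / 3 := by
    field_simp
    ring
  rw [e]
  linarith

lemma log_one_add_inv_eq {x : ℝ} (hx : 0 < x) : log (1 + 1 / x) = log (x + 1) - log x := by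
  rw [← log_div (by linarith) hx.ne']
  congr 1
  field_simp

lemma tendsto_one_div_two_mul_atTop : Tendsto (fun x : ℝ => 1 / (2 * x)) atTop (𝓝 0) :=
  (tendsto_id.const_mul_atTop (by norm_num : (0:ℝ) < 2)).inv_tendsto_atTop.congr
    fun x => (one_div _).symm

lemma one_div_two_mul_lt_log_sub_digamma {x : ℝ} (hx : 0 < x) :
    1 / (2 * x) < log x - digamma x := by
  suffices 0 < log x - digamma x - 1 / (2 * x) by linarith
  refine pos_of_tendsto_zero_of_add_one_lt (g := fun y => log y - digamma y - 1 / (2 * y))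
    (by simpa using tendsto_log_sub_digamma_atTop.sub tendsto_one_div_two_mul_atTop) fun y hy => ?_
  have hy0 : 0 < y := hx.trans_le hy
  have hlog := log_one_add_inv_lt hy0
  rw [log_one_add_inv_eq hy0] at hlog
  rw [digamma_add_one hy0]
  have hhalf : 1 / y = 1 / (2 * y) + 1 / (2 * y) := by field_simp; norm_num
  linarith

lemma log_sub_digamma_lt {x : ℝ} (hx : 0 < x) :
    log x - digamma x < 1 / (2 * x) + 1 / (12 * x ^ 2) := by
  suffices 0 < 1 / (2 * x) + 1 / (12 * x ^ 2) - (log x - digamma x) by linarith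
  refine pos_of_tendsto_zero_of_add_one_lt
    (g := fun y => 1 / (2 * y) + 1 / (12 * y ^ 2) - (log y - digamma y)) ?_ fun y hy => ?_
  · have h12 : Tendsto (fun y : ℝ => 1 / (12 * y ^ 2)) atTop (𝓝 0) :=
      ((tendsto_pow_atTop two_ne_zero).const_mul_atTop
        (by norm_num : (0:ℝ) < 12)).inv_tendsto_atTop.congr fun y => (one_div _).symm
    simpa using (tendsto_one_div_two_mul_atTop.add h12).sub tendsto_log_sub_digamma_atTop
  · have hy0 : 0 < y := hx.trans_le hy
    have hlog := lt_log_one_add_inv hy0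
    rw [log_one_add_inv_eq hy0] at hlog
    rw [digamma_add_one hy0]
    have hhalf : 1 / y = 1 / (2 * y) + 1 / (2 * y) := by field_simp; norm_num
    linarith

noncomputable def theta₁ (x : ℝ) : ℝ := x * (log x - digamma x)

lemma theta₁_add_one_sub {x : ℝ} (hx : 0 < x) :
    theta₁ (x + 1) - theta₁ x =
      (x + 1) * log (1 + 1 / x) - 1 - 1 / x + (log x - digamma x) := by
  rw [theta₁, theta₁, digamma_add_one hx, log_one_add_inv_eq hx]
  field_simp
  ring

lemma tendsto_add_one_mul_log_one_add_inv_sub_one :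
    Tendsto (fun x : ℝ => (x + 1) * log (1 + 1 / x) - 1) atTop (𝓝 0) := by
  have hlog : Tendsto (fun x : ℝ => log (1 + 1 / x)) atTop (𝓝 0) := by
    simpa using ((tendsto_const_nhds (x := (1:ℝ))).add
      (tendsto_inv_atTop_zero.congr fun x => (one_div x).symm)).log (by norm_num)
  simpa [add_mul] using ((tendsto_mul_log_one_add_div_atTop 1).add hlog).sub_const 1

theorem theta_diff_tendsto_zero :
    Tendsto (fun x : ℝ => ((x + 1) * (Real.log (x + 1) - digamma (x + 1)) -
      x * (Real.log x - digamma x))) atTop (nhds 0) ∧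
    ∀ x : ℝ, 0 < x →
      (x + 1) * Real.log (1 + 1 / x) - 1 / (2 * x) - 1 <
        (x + 1) * (Real.log (x + 1) - digamma (x + 1)) - x * (Real.log x - digamma x) ∧
      (x + 1) * (Real.log (x + 1) - digamma (x + 1)) - x * (Real.log x - digamma x) <
        (x + 1) * Real.log (1 + 1 / x) - 1 / (2 * x) + 1 / (12 * x ^ 2) - 1 := by
  change Tendsto (fun x => theta₁ (x + 1) - theta₁ x) atTop (𝓝 0) ∧
    ∀ x : ℝ, 0 < x → _ < theta₁ (x + 1) - theta₁ x ∧ theta₁ (x + 1) - theta₁ x < _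
  refine ⟨?_, fun x hx => ?_⟩
  · have hlim := (tendsto_add_one_mul_log_one_add_inv_sub_one.sub
      (tendsto_inv_atTop_zero.congr fun x => (one_div x).symm)).add tendsto_log_sub_digamma_atTop
    rw [sub_zero, add_zero] at hlim
    refine hlim.congr' ?_
    filter_upwards [eventually_gt_atTop 0] with x hx
    rw [theta₁_add_one_sub hx]
  · have hhalf : 1 / x = 1 / (2 * x) + 1 / (2 * x) := by field_simp; norm_num
    rw [theta₁_add_one_sub hx]
    constructor <;> linarith [one_div_two_mul_lt_log_sub_digamma hx, log_sub_digamma_lt hx]
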